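/- arXiv:1611.07185 — 2 statements merged into one kernel-verified Lean document; each statement's English description precedes it below -/
import Mathlib

section
/- Let H be a connected r-uniform hypergraph on n vertices (r ≥ 3). Then ρ(H) = ((1/n) ∑_{i=1}^n d_i^{r/(r-1)})^{(r-1)/r} if and only if H is regular (all degrees equal). -/
/-- Degree of a vertex in a hypergraph: the number of edges containing it. -/
def hDeg {V : Type*} [DecidableEq V] (E : Finset (Finset V)) (i : V) : ℕ :=
  (E.filter (fun e => i ∈ e)).card

/-- Adjacency tensor of an `r`-uniform hypergraph: entry `1/(r-1)!` on index tuples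
whose underlying set is an edge, and `0` otherwise. -/
noncomputable def adjT {V : Type*} [DecidableEq V] (r : ℕ) (E : Finset (Finset V)) :
    (Fin r → V) → ℝ :=
  fun t => if Finset.image t Finset.univ ∈ E then 1 / ((r - 1).factorial : ℝ) else 0

/-- The quadratic-type form `x^T (T x) = ∑ t, T_t ∏ₖ x_{tₖ}` of an order-`r` tensor. -/
noncomputable def form {V : Type*} [Fintype V] {r : ℕ} (T : (Fin r → V) → ℝ) (x : V → ℝ) : ℝ :=
  ∑ t : Fin r → V, T t * ∏ k, x (t k)

/-- Spectral radius of a nonnegative symmetric order-`r` tensor, via the variational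
characterization: the supremum of `x^T (T x)` over nonnegative `x` with `∑ xᵢ^r = 1`. -/
noncomputable def specRad {V : Type*} [Fintype V] {r : ℕ}
    (T : (Fin r → V) → ℝ) : ℝ :=
  sSup {q : ℝ | ∃ x : V → ℝ, (∀ i, 0 ≤ x i) ∧ (∑ i, x i ^ r = 1) ∧ q = form T x}

/-- Two vertices are adjacent in a hypergraph if some edge contains both. -/
def hAdj {V : Type*} (E : Finset (Finset V)) (i j : V) : Prop :=
  ∃ e ∈ E, i ∈ e ∧ j ∈ e

/-- A hypergraph is connected if any two vertices are joined by a walk. -/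
def hConn {V : Type*} (E : Finset (Finset V)) : Prop :=
  ∀ i j : V, Relation.ReflTransGen (hAdj E) i j

/-
For `x ≥ 0` with `∑ xᵢ ^ r = 1`, AM-GM on each edge gives
`xᵀ(A x) = r ∑_e ∏_{v ∈ e} x_v ≤ ∑ dᵢ xᵢ ^ r`, so `ρ ≤ d` for a `d`-regular hypergraph, and the
constant vector shows `ρ ≥ d`.

Conversely, take `cᵢ ∝ dᵢ ^ (1/(r-1))` with `∑ cᵢ ^ r = n`, so that `(1/n) ∑ dᵢ cᵢ` is exactly
the power mean on the right-hand side, and test with `xᵢ ^ r = (r - 1 + cᵢ ^ r) / (r n)`.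
Hölder's inequality for the `r` functions `f_k = c_k 𝟙_{k} + 𝟙_{e ∖ {k}}` on an edge `e` gives
`∑_{v ∈ e} c_v ≤ ∏_{v ∈ e} (r - 1 + c_v ^ r) ^ (1/r)`, hence `ρ ≥ (1/n) ∑ dᵢ cᵢ`. For `r ≥ 3`
any two of these functions are both `1` at a third vertex, so equality in Hölder forces `c_v = 1`
on every edge; together with `∑ cᵢ ^ r = n` this gives `c ≡ 1`, i.e. `H` is regular.
-/

open Finset

lemma cast_sub_one_pos {r : ℕ} (hr : 2 ≤ r) : (0 : ℝ) < r - 1 :=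
  sub_pos.mpr (Nat.one_lt_cast.mpr hr)

lemma sub_one_add_pow_pos {r : ℕ} {x : ℝ} (hr : 2 ≤ r) (hx : 0 ≤ x) :
    0 < (r : ℝ) - 1 + x ^ r :=
  add_pos_of_pos_of_nonneg (cast_sub_one_pos hr) (pow_nonneg hx r)

lemma sum_const_inv_eq_one {ι : Type*} {s : Finset ι} {r : ℕ} (hs : #s = r) (hr : r ≠ 0) :
    ∑ _v ∈ s, (r⁻¹ : ℝ) = 1 := by
  rw [sum_const, hs, nsmul_eq_mul, mul_inv_cancel₀ (by exact_mod_cast hr)]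

lemma prod_le_inv_mul_sum_pow {ι : Type*} {s : Finset ι} {r : ℕ} {x : ι → ℝ} (hs : #s = r)
    (hr : r ≠ 0) (hx : ∀ v ∈ s, 0 ≤ x v) : ∏ v ∈ s, x v ≤ (r⁻¹ : ℝ) * ∑ v ∈ s, x v ^ r := by
  rw [mul_sum]
  convert Real.geom_mean_le_arith_mean_weighted s (fun _ => (r⁻¹ : ℝ)) (fun v => x v ^ r)
    (fun _ _ => by positivity) (sum_const_inv_eq_one hs hr) (fun v hv => pow_nonneg (hx v hv) r)
    using 2 with v hv
  exact (Real.pow_rpow_inv_natCast (hx v hv) hr).symm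

section HolderInequality

variable {ι : Type*} [DecidableEq ι] {s : Finset ι} {r : ℕ} {a : ι → ℝ} {k v : ι}

/-- With `f_k v = if v = k then a v else 1`, so that `∏_{k ∈ s} f_k = a` on `s`, and `#s = r`,
this is `f_k(v) ^ r / ∑_{j ∈ s} f_j(v) ^ r`: Hölder's inequality for the `f_k` is AM-GM for these
weights. -/
noncomputable def holderWeight (r : ℕ) (a : ι → ℝ) (k v : ι) : ℝ :=
  (if v = k then a v ^ r else 1) / ((r : ℝ) - 1 + a v ^ r)

lemma sum_holderWeight (hs : #s = r) (hr : 2 ≤ r) (hv : v ∈ s) (ha : 0 ≤ a v) :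
    ∑ k ∈ s, holderWeight r a k v = 1 := by
  have hnum : ∑ k ∈ s, (if v = k then a v ^ r else (1 : ℝ)) = a v ^ r + ((r : ℝ) - 1) := by
    rw [← add_sum_erase s _ hv, if_pos rfl,
      sum_congr rfl fun k hk => if_neg (ne_of_mem_erase hk).symm, sum_const, card_erase_of_mem hv,
      hs, nsmul_one, Nat.cast_pred (by omega)]
  unfold holderWeight
  rw [← sum_div, hnum, add_comm, div_self (sub_one_add_pow_pos hr ha).ne']

lemma prod_holderWeight_rpow (hr : 2 ≤ r) (hk : k ∈ s) (ha : ∀ v ∈ s, 0 ≤ a v) :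
    ∏ v ∈ s, holderWeight r a k v ^ (r⁻¹ : ℝ)
      = a k / ∏ v ∈ s, ((r : ℝ) - 1 + a v ^ r) ^ (r⁻¹ : ℝ) := by
  have hnum : ∀ v ∈ s, (0 : ℝ) ≤ if v = k then a v ^ r else 1 := fun v hv => by
    split_ifs
    · exact pow_nonneg (ha v hv) r
    · exact zero_le_one
  unfold holderWeight
  rw [prod_congr rfl fun v hv =>
      Real.div_rpow (hnum v hv) (sub_one_add_pow_pos hr (ha v hv)).le _, prod_div_distrib,
    prod_eq_single_of_mem k hk fun v _ hvk => by rw [if_neg hvk, Real.one_rpow], if_pos rfl,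
    Real.pow_rpow_inv_natCast (ha k hk) (by omega)]

lemma holderWeight_nonneg (hr : 2 ≤ r) (ha : 0 ≤ a v) : 0 ≤ holderWeight r a k v := by
  unfold holderWeight
  split_ifs
  · exact div_nonneg (pow_nonneg ha r) (sub_one_add_pow_pos hr ha).le
  · exact div_nonneg zero_le_one (sub_one_add_pow_pos hr ha).le

lemma prod_rpow_mul_sum_prod_holderWeight_rpow (hr : 2 ≤ r) (ha : ∀ v ∈ s, 0 ≤ a v) :
    (∏ v ∈ s, ((r : ℝ) - 1 + a v ^ r) ^ (r⁻¹ : ℝ))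
        * ∑ k ∈ s, ∏ v ∈ s, holderWeight r a k v ^ (r⁻¹ : ℝ) = ∑ k ∈ s, a k := by
  have hP : ∏ v ∈ s, ((r : ℝ) - 1 + a v ^ r) ^ (r⁻¹ : ℝ) ≠ 0 :=
    (prod_pos fun v hv => Real.rpow_pos_of_pos (sub_one_add_pow_pos hr (ha v hv)) _).ne'
  rw [mul_sum]
  exact sum_congr rfl fun k hk => by rw [prod_holderWeight_rpow hr hk ha, mul_div_cancel₀ _ hP]

lemma sum_sum_inv_mul_holderWeight (hs : #s = r) (hr : 2 ≤ r) (ha : ∀ v ∈ s, 0 ≤ a v) :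
    ∑ k ∈ s, ∑ v ∈ s, (r⁻¹ : ℝ) * holderWeight r a k v = 1 := by
  rw [sum_comm, ← sum_const_inv_eq_one hs (by omega)]
  exact sum_congr rfl fun v hv => by rw [← mul_sum, sum_holderWeight hs hr hv (ha v hv), mul_one]

lemma prod_holderWeight_rpow_le (hs : #s = r) (hr : 2 ≤ r) (ha : ∀ v ∈ s, 0 ≤ a v) (k : ι) :
    ∏ v ∈ s, holderWeight r a k v ^ (r⁻¹ : ℝ) ≤ ∑ v ∈ s, (r⁻¹ : ℝ) * holderWeight r a k v :=
  Real.geom_mean_le_arith_mean_weighted s _ _ (fun _ _ => by positivity)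
    (sum_const_inv_eq_one hs (by omega)) fun v hv => holderWeight_nonneg hr (ha v hv)

lemma exists_holderWeight_ne (hs : #s = r) (hr : 3 ≤ r) (ha : ∀ v ∈ s, 0 ≤ a v)
    (hne : ∃ v ∈ s, a v ≠ 1) :
    ∃ k ∈ s, ∃ j ∈ s, ∃ m ∈ s, holderWeight r a k j ≠ holderWeight r a k m := by
  obtain ⟨v, hv, hav⟩ := hne
  -- constancy of `holderWeight r a k` for `k = v` and for some `k ≠ v`, read off at a third
  -- vertex `m`, forces `a v ^ r = 1`
  by_contra! hconst
  obtain ⟨k, hk, m, hm, hkm⟩ := one_lt_card.mp (show 1 < #(s.erase v) by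
    rw [card_erase_of_mem hv]; omega)
  have hmv := ne_of_mem_erase hm
  have hkv := ne_of_mem_erase hk
  have h1 := hconst v hv v hv m (mem_of_mem_erase hm)
  have h2 := hconst k (mem_of_mem_erase hk) v hv m (mem_of_mem_erase hm)
  simp only [holderWeight, ↓reduceIte, if_neg hmv, if_neg hkv.symm, if_neg hkm.symm] at h1 h2
  rw [← h2, div_left_inj' (sub_one_add_pow_pos (by omega) (ha v hv)).ne',
    pow_eq_one_iff_of_nonneg (ha v hv) (by omega)] at h1
  exact hav h1

theorem sum_le_prod_sub_one_add_pow_rpow (hs : #s = r) (hr : 2 ≤ r) (ha : ∀ v ∈ s, 0 ≤ a v) :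
    ∑ v ∈ s, a v ≤ ∏ v ∈ s, ((r : ℝ) - 1 + a v ^ r) ^ (r⁻¹ : ℝ) := by
  rw [← prod_rpow_mul_sum_prod_holderWeight_rpow hr ha]
  refine mul_le_of_le_one_right (prod_nonneg fun v hv => ?_) ?_
  · exact Real.rpow_nonneg (sub_one_add_pow_pos hr (ha v hv)).le _
  · rw [← sum_sum_inv_mul_holderWeight hs hr ha]
    exact sum_le_sum fun k _ => prod_holderWeight_rpow_le hs hr ha k

theorem sum_lt_prod_sub_one_add_pow_rpow (hs : #s = r) (hr : 3 ≤ r) (ha : ∀ v ∈ s, 0 ≤ a v)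
    (hne : ∃ v ∈ s, a v ≠ 1) :
    ∑ v ∈ s, a v < ∏ v ∈ s, ((r : ℝ) - 1 + a v ^ r) ^ (r⁻¹ : ℝ) := by
  have hr2 : 2 ≤ r := by omega
  rw [← prod_rpow_mul_sum_prod_holderWeight_rpow hr2 ha]
  refine mul_lt_of_lt_one_right (prod_pos fun v hv => ?_) ?_
  · exact Real.rpow_pos_of_pos (sub_one_add_pow_pos hr2 (ha v hv)) _
  · rw [← sum_sum_inv_mul_holderWeight hs hr2 ha]
    obtain ⟨k, hk, hw⟩ := exists_holderWeight_ne hs hr ha hne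
    refine sum_lt_sum (fun k _ => prod_holderWeight_rpow_le hs hr2 ha k) ⟨k, hk, ?_⟩
    exact (Real.geom_mean_lt_arith_mean_weighted_iff_of_pos s _ _ (fun _ _ => by positivity)
      (sum_const_inv_eq_one hs (by omega))
      fun u hu => holderWeight_nonneg hr2 (ha u hu)).mpr hw

end HolderInequality

section SpecRad

variable {V : Type*} [Fintype V] {r : ℕ}

lemma form_le_sum_abs (T : (Fin r → V) → ℝ) {x : V → ℝ} (hx : ∀ i, 0 ≤ x i)
    (hx1 : ∑ i, x i ^ r = 1) : form T x ≤ ∑ t, |T t| := by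
  have hle : ∀ i, x i ^ r ≤ 1 := fun i =>
    hx1 ▸ single_le_sum (fun j _ => pow_nonneg (hx j) r) (mem_univ i)
  refine sum_le_sum fun t _ => ?_
  have hprod : ∏ k, x (t k) ≤ 1 := prod_le_one (fun k _ => hx _) fun k _ =>
    (pow_le_one_iff_of_nonneg (hx _) (Fin.pos k).ne').mp (hle _)
  calc T t * ∏ k, x (t k) ≤ |T t| * ∏ k, x (t k) :=
        mul_le_mul_of_nonneg_right (le_abs_self _) (prod_nonneg fun k _ => hx _)
    _ ≤ |T t| := mul_le_of_le_one_right (abs_nonneg _) hprod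

lemma form_le_specRad (T : (Fin r → V) → ℝ) {x : V → ℝ} (hx : ∀ i, 0 ≤ x i)
    (hx1 : ∑ i, x i ^ r = 1) : form T x ≤ specRad T :=
  le_csSup ⟨∑ t, |T t|, by rintro _ ⟨y, hy, hy1, rfl⟩; exact form_le_sum_abs T hy hy1⟩
    ⟨x, hx, hx1, rfl⟩

lemma specRad_le {T : (Fin r → V) → ℝ} {a : ℝ} (ha : 0 ≤ a)
    (h : ∀ x : V → ℝ, (∀ i, 0 ≤ x i) → ∑ i, x i ^ r = 1 → form T x ≤ a) : specRad T ≤ a :=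
  Real.sSup_le (by rintro _ ⟨x, hx, hx1, rfl⟩; exact h x hx hx1) ha

end SpecRad

section Counting

variable {α V : Type*} [Fintype α] [DecidableEq V]

lemma injective_of_image_univ_eq {t : α → V} {e : Finset V} (ht : image t univ = e)
    (he : #e = Fintype.card α) : Function.Injective t := by
  rw [← Set.injOn_univ, ← coe_univ, ← card_image_iff, ht, he, card_univ]

variable [DecidableEq α] [Fintype V]

lemma card_filter_image_univ_eq (e : Finset V) (he : #e = Fintype.card α) :
    #{t : α → V | image t univ = e} = (Fintype.card α).factorial := by
  let emb : (α ↪ e) ↪ (α → V) := ⟨fun f k => f k, fun f g h =>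
    Function.Embedding.ext fun k => Subtype.ext (congrFun h k)⟩
  have hmap : ({t : α → V | image t univ = e} : Finset _) = univ.map emb := by
    ext t
    simp only [mem_filter, mem_univ, true_and, mem_map]
    constructor
    · intro ht
      have hmem : ∀ k, t k ∈ e := fun k => ht ▸ mem_image_of_mem t (mem_univ k)
      exact ⟨⟨fun k => ⟨t k, hmem k⟩, fun a b h =>
        injective_of_image_univ_eq ht he (congrArg Subtype.val h)⟩, rfl⟩
    · rintro ⟨f, rfl⟩
      refine eq_of_subset_of_card_le (fun v hv => ?_) ?_
      · obtain ⟨k, -, rfl⟩ := mem_image.mp hv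
        exact (f k).2
      · rw [he, ← card_univ]
        exact (card_image_of_injective _ (Subtype.val_injective.comp f.injective)).ge
  rw [hmap, card_map, card_univ, Fintype.card_embedding_eq, Fintype.card_coe, he,
    Nat.descFactorial_self]

lemma sum_filter_image_univ_eq_prod (e : Finset V) (he : #e = Fintype.card α) (x : V → ℝ) :
    ∑ t : α → V with image t univ = e, ∏ k, x (t k)
      = (Fintype.card α).factorial * ∏ v ∈ e, x v := by
  rw [sum_congr rfl fun t ht => ?_, sum_const, card_filter_image_univ_eq e he, nsmul_eq_mul]
  have ht : image t univ = e := (mem_filter.mp ht).2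
  rw [← ht, prod_image fun a _ b _ h => injective_of_image_univ_eq ht he h]

end Counting

section AdjacencyTensor

variable {V : Type*} [Fintype V] [DecidableEq V] {r : ℕ} {E : Finset (Finset V)}

lemma form_adjT (hr : r ≠ 0) (hE : ∀ e ∈ E, #e = r) (x : V → ℝ) :
    form (adjT r E) x = r * ∑ e ∈ E, ∏ v ∈ e, x v := by
  have hsplit : ∀ t : Fin r → V, adjT r E t * ∏ k, x (t k)
      = ∑ e ∈ E, if image t univ = e then (1 / ((r - 1).factorial : ℝ)) * ∏ k, x (t k) else 0 := by
    intro t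
    rw [sum_ite_eq, adjT, ite_mul, zero_mul]
  have hfiber : ∀ e ∈ E,
      ∑ t : Fin r → V with image t univ = e, (1 / ((r - 1).factorial : ℝ)) * ∏ k, x (t k)
        = r * ∏ v ∈ e, x v := by
    intro e he
    rw [← mul_sum, sum_filter_image_univ_eq_prod e (by rw [hE e he, Fintype.card_fin]),
      Fintype.card_fin, ← mul_assoc, ← Nat.mul_factorial_pred hr]
    push_cast
    field_simp
  rw [form, sum_congr rfl fun t _ => hsplit t, sum_comm, mul_sum]
  exact sum_congr rfl fun e he => (sum_filter _ _).symm.trans (hfiber e he)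

lemma sum_sum_mem_eq_sum_hDeg_mul (E : Finset (Finset V)) (c : V → ℝ) :
    ∑ e ∈ E, ∑ v ∈ e, c v = ∑ i, (hDeg E i : ℝ) * c i := by
  calc ∑ e ∈ E, ∑ v ∈ e, c v = ∑ e ∈ E, ∑ i, if i ∈ e then c i else 0 := by
        simp only [sum_ite_mem, univ_inter]
    _ = ∑ i, (hDeg E i : ℝ) * c i := by
        rw [sum_comm]
        simp only [← sum_filter, sum_const, nsmul_eq_mul, hDeg]

lemma form_adjT_le (hr : r ≠ 0) (hE : ∀ e ∈ E, #e = r) {x : V → ℝ} (hx : ∀ i, 0 ≤ x i) :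
    form (adjT r E) x ≤ ∑ i, (hDeg E i : ℝ) * x i ^ r := by
  have hr' : (r : ℝ) ≠ 0 := by exact_mod_cast hr
  calc form (adjT r E) x = r * ∑ e ∈ E, ∏ v ∈ e, x v := form_adjT hr hE x
    _ ≤ r * ∑ e ∈ E, (r⁻¹ : ℝ) * ∑ v ∈ e, x v ^ r := by
        gcongr with e he
        exact prod_le_inv_mul_sum_pow (hE e he) hr fun v _ => hx v
    _ = ∑ i, (hDeg E i : ℝ) * x i ^ r := by
        rw [← mul_sum, ← mul_assoc, mul_inv_cancel₀ hr', one_mul, sum_sum_mem_eq_sum_hDeg_mul]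

end AdjacencyTensor

section TestVector

variable {V : Type*} [Fintype V] {r : ℕ} {c : V → ℝ} {i : V}

/-- `xᵢ ^ r` is `1/n` times the mean over `k` of the `f_k(i) ^ r` of `holderWeight` (for `a = c`
and any edge containing `i`), so `∏_{v ∈ e} x_v` is the right-hand side of Hölder's inequality. -/
noncomputable def testVec (r : ℕ) (c : V → ℝ) (i : V) : ℝ :=
  (((r : ℝ) - 1 + c i ^ r) / (r * Fintype.card V)) ^ (r⁻¹ : ℝ)

lemma testVec_nonneg (hr : 2 ≤ r) (hc : 0 ≤ c i) : 0 ≤ testVec r c i :=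
  Real.rpow_nonneg (div_nonneg (sub_one_add_pow_pos hr hc).le (by positivity)) _

lemma sum_testVec_pow [Nonempty V] (hr : 2 ≤ r) (hc : ∀ i, 0 ≤ c i)
    (hcn : ∑ i, c i ^ r = Fintype.card V) :
    ∑ i, testVec r c i ^ r = 1 := by
  have hV : (Fintype.card V : ℝ) ≠ 0 := by exact_mod_cast Fintype.card_ne_zero
  simp only [testVec]
  rw [sum_congr rfl fun i _ => Real.rpow_inv_natCast_pow
      (div_nonneg (sub_one_add_pow_pos hr (hc i)).le (by positivity)) (by omega),
    ← sum_div, sum_add_distrib, hcn, sum_const, card_univ, nsmul_eq_mul]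
  field_simp
  ring

lemma prod_testVec (hr : 2 ≤ r) (hc : ∀ i, 0 ≤ c i) {e : Finset V} (he : #e = r) :
    ∏ v ∈ e, testVec r c v
      = (∏ v ∈ e, ((r : ℝ) - 1 + c v ^ r) ^ (r⁻¹ : ℝ)) / (r * Fintype.card V) := by
  simp only [testVec]
  rw [prod_congr rfl fun v _ => Real.div_rpow (sub_one_add_pow_pos hr (hc v)).le (by positivity) _,
    prod_div_distrib, prod_const, he, Real.rpow_inv_natCast_pow (by positivity) (by omega)]

variable [DecidableEq V] {E : Finset (Finset V)}

lemma form_adjT_testVec (hr : 2 ≤ r) (hE : ∀ e ∈ E, #e = r) (hc : ∀ i, 0 ≤ c i) :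
    form (adjT r E) (testVec r c)
      = (∑ e ∈ E, ∏ v ∈ e, ((r : ℝ) - 1 + c v ^ r) ^ (r⁻¹ : ℝ)) / Fintype.card V := by
  rw [form_adjT (by omega) hE, sum_congr rfl fun e he => prod_testVec hr hc (hE e he), ← sum_div,
    mul_div_assoc', mul_div_mul_left _ _ (by positivity)]

theorem sum_hDeg_mul_div_le_specRad [Nonempty V] (hr : 2 ≤ r) (hE : ∀ e ∈ E, #e = r)
    (hc : ∀ i, 0 ≤ c i) (hcn : ∑ i, c i ^ r = Fintype.card V) :
    (∑ i, (hDeg E i : ℝ) * c i) / Fintype.card V ≤ specRad (adjT r E) := by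
  calc (∑ i, (hDeg E i : ℝ) * c i) / Fintype.card V
      ≤ form (adjT r E) (testVec r c) := by
        rw [form_adjT_testVec hr hE hc, ← sum_sum_mem_eq_sum_hDeg_mul]
        gcongr with e he
        exact sum_le_prod_sub_one_add_pow_rpow (hE e he) hr fun v _ => hc v
    _ ≤ specRad (adjT r E) :=
        form_le_specRad _ (fun i => testVec_nonneg hr (hc i)) (sum_testVec_pow hr hc hcn)

theorem sum_hDeg_mul_div_lt_specRad [Nonempty V] (hr : 3 ≤ r) (hE : ∀ e ∈ E, #e = r)
    (hc : ∀ i, 0 ≤ c i) (hcn : ∑ i, c i ^ r = Fintype.card V) (hne : ∃ e ∈ E, ∃ v ∈ e, c v ≠ 1) :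
    (∑ i, (hDeg E i : ℝ) * c i) / Fintype.card V < specRad (adjT r E) := by
  have hr2 : 2 ≤ r := by omega
  obtain ⟨e, he, hv⟩ := hne
  have hedges : ∑ e ∈ E, ∑ v ∈ e, c v < ∑ e ∈ E, ∏ v ∈ e, ((r : ℝ) - 1 + c v ^ r) ^ (r⁻¹ : ℝ) :=
    sum_lt_sum (fun e he => sum_le_prod_sub_one_add_pow_rpow (hE e he) hr2 fun v _ => hc v)
      ⟨e, he, sum_lt_prod_sub_one_add_pow_rpow (hE e he) hr (fun v _ => hc v) hv⟩
  calc (∑ i, (hDeg E i : ℝ) * c i) / Fintype.card V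
      < form (adjT r E) (testVec r c) := by
        rw [form_adjT_testVec hr2 hE hc, ← sum_sum_mem_eq_sum_hDeg_mul]
        exact div_lt_div_of_pos_right hedges (by positivity)
    _ ≤ specRad (adjT r E) :=
        form_le_specRad _ (fun i => testVec_nonneg hr2 (hc i)) (sum_testVec_pow hr2 hc hcn)

end TestVector

section DualWeights

variable {V : Type*} [Fintype V] {r : ℕ} {d : V → ℝ}

/-- Normalised so that `∑ cᵢ ^ r = n`, this is the equality case of Hölder's inequality
`∑ dᵢ cᵢ ≤ ‖d‖_{r/(r-1)} ‖c‖_r`; hence `(1/n) ∑ dᵢ cᵢ` is the `r/(r-1)`-power mean of `d`. -/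
noncomputable def dualWeights (r : ℕ) (d : V → ℝ) (i : V) : ℝ :=
  d i ^ ((r : ℝ) - 1)⁻¹
    / ((1 / (Fintype.card V : ℝ)) * ∑ j, d j ^ ((r : ℝ) / ((r : ℝ) - 1))) ^ (r⁻¹ : ℝ)

lemma mean_rpow_nonneg (hd : ∀ i, 0 ≤ d i) :
    0 ≤ (1 / (Fintype.card V : ℝ)) * ∑ j, d j ^ ((r : ℝ) / ((r : ℝ) - 1)) :=
  mul_nonneg (by positivity) (sum_nonneg fun j _ => Real.rpow_nonneg (hd j) _)

lemma dualWeights_nonneg (hd : ∀ i, 0 ≤ d i) (i : V) : 0 ≤ dualWeights r d i :=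
  div_nonneg (Real.rpow_nonneg (hd i) _) (Real.rpow_nonneg (mean_rpow_nonneg hd) _)

lemma dualWeights_of_eq_zero (hr : 2 ≤ r) {i : V} (hi : d i = 0) : dualWeights r d i = 0 := by
  rw [dualWeights, hi, Real.zero_rpow (inv_ne_zero (cast_sub_one_pos hr).ne'),
    zero_div]

lemma dualWeights_pow (hr : 2 ≤ r) (hd : ∀ i, 0 ≤ d i) (i : V) :
    dualWeights r d i ^ r = d i ^ ((r : ℝ) / ((r : ℝ) - 1))
      / ((1 / (Fintype.card V : ℝ)) * ∑ j, d j ^ ((r : ℝ) / ((r : ℝ) - 1))) := by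
  rw [dualWeights, div_pow, ← Real.rpow_mul_natCast (hd i), inv_mul_eq_div,
    Real.rpow_inv_natCast_pow (mean_rpow_nonneg hd) (by omega)]

variable [Nonempty V]

lemma sum_dualWeights_pow (hr : 2 ≤ r) (hd : ∀ i, 0 ≤ d i)
    (hS : 0 < ∑ j, d j ^ ((r : ℝ) / ((r : ℝ) - 1))) :
    ∑ i, dualWeights r d i ^ r = Fintype.card V := by
  have hV : (Fintype.card V : ℝ) ≠ 0 := by exact_mod_cast Fintype.card_ne_zero
  simp only [dualWeights_pow hr hd, ← sum_div]
  field_simp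

lemma sum_mul_dualWeights_div (hr : 2 ≤ r) (hd : ∀ i, 0 ≤ d i)
    (hS : 0 < ∑ j, d j ^ ((r : ℝ) / ((r : ℝ) - 1))) :
    (∑ i, d i * dualWeights r d i) / Fintype.card V
      = ((1 / (Fintype.card V : ℝ)) * ∑ j, d j ^ ((r : ℝ) / ((r : ℝ) - 1)))
          ^ (((r : ℝ) - 1) / (r : ℝ)) := by
  set M := (1 / (Fintype.card V : ℝ)) * ∑ j, d j ^ ((r : ℝ) / ((r : ℝ) - 1))
  have hM : 0 < M := mul_pos (by positivity) hS
  have hr1 := cast_sub_one_pos hr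
  have hterm : ∀ i, d i * dualWeights r d i = d i ^ ((r : ℝ) / ((r : ℝ) - 1)) / M ^ (r⁻¹ : ℝ) := by
    intro i
    rw [dualWeights, mul_div_assoc', ← Real.rpow_one_add' (hd i) (by positivity)]
    congr 2
    field_simp
    ring
  calc (∑ i, d i * dualWeights r d i) / Fintype.card V = M ^ (1 : ℝ) / M ^ (r⁻¹ : ℝ) := by
        rw [sum_congr rfl fun i _ => hterm i, ← sum_div, Real.rpow_one]
        ring
    _ = M ^ (((r : ℝ) - 1) / (r : ℝ)) := by
        rw [← Real.rpow_sub hM]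
        congr 1
        field_simp

lemma eq_of_dualWeights_eq (hr : 2 ≤ r) (hd : ∀ i, 0 ≤ d i)
    (hS : 0 < ∑ j, d j ^ ((r : ℝ) / ((r : ℝ) - 1))) {i j : V}
    (h : dualWeights r d i = dualWeights r d j) : d i = d j := by
  have hM : 0 < (1 / (Fintype.card V : ℝ)) * ∑ j, d j ^ ((r : ℝ) / ((r : ℝ) - 1)) :=
    mul_pos (by positivity) hS
  have ha : ((r : ℝ) - 1)⁻¹ ≠ 0 := inv_ne_zero (cast_sub_one_pos hr).ne'
  rw [dualWeights, dualWeights, div_left_inj' (Real.rpow_pos_of_pos hM _).ne'] at h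
  rw [← Real.rpow_rpow_inv (hd i) ha, ← Real.rpow_rpow_inv (hd j) ha, h]

end DualWeights

lemma eq_one_of_forall_mem_edge_eq_one {V : Type*} [Fintype V] [DecidableEq V]
    {E : Finset (Finset V)} {r : ℕ} {c : V → ℝ} (hr : r ≠ 0)
    (hc0 : ∀ i, hDeg E i = 0 → c i = 0) (hcn : ∑ i, c i ^ r = Fintype.card V)
    (hE1 : ∀ e ∈ E, ∀ v ∈ e, c v = 1) (i : V) : c i = 1 := by
  have h01 : ∀ i, c i = 0 ∨ c i = 1 := by
    intro i
    by_cases hi : hDeg E i = 0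
    · exact .inl (hc0 i hi)
    · obtain ⟨e, he⟩ := card_ne_zero.mp hi
      exact .inr (hE1 e (mem_filter.mp he).1 i (mem_filter.mp he).2)
  have hle : ∀ i ∈ univ, c i ^ r ≤ 1 := fun i _ => by
    rcases h01 i with h | h <;> simp [h, hr]
  have hpow : ∀ i ∈ univ, c i ^ r = 1 :=
    (sum_eq_sum_iff_of_le hle).mp (by rw [hcn, sum_const, card_univ, nsmul_one])
  rcases h01 i with h | h
  · simpa [h, hr] using hpow i (mem_univ i)
  · exact h

section Regularity

variable {V : Type*} [Fintype V] [DecidableEq V] [Nonempty V] {r : ℕ} {E : Finset (Finset V)}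

theorem specRad_adjT_of_forall_hDeg_eq (hr : 2 ≤ r) (hE : ∀ e ∈ E, #e = r) {d : ℕ}
    (hd : ∀ i, hDeg E i = d) : specRad (adjT r E) = d := by
  refine le_antisymm (specRad_le d.cast_nonneg fun x hx hx1 => ?_) ?_
  · simpa only [hd, ← mul_sum, hx1, mul_one] using form_adjT_le (by omega) hE hx
  · have hV : (Fintype.card V : ℝ) ≠ 0 := by exact_mod_cast Fintype.card_ne_zero
    simpa [hd, hV] using
      sum_hDeg_mul_div_le_specRad (c := 1) hr hE (fun _ => zero_le_one) (by simp)

theorem exists_forall_hDeg_eq_of_specRad_eq (hr : 3 ≤ r) (hE : ∀ e ∈ E, #e = r)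
    (h : specRad (adjT r E) =
      ((1 / (Fintype.card V : ℝ)) * ∑ i, (hDeg E i : ℝ) ^ ((r : ℝ) / ((r : ℝ) - 1)))
        ^ (((r : ℝ) - 1) / (r : ℝ))) :
    ∃ d : ℕ, ∀ i, hDeg E i = d := by
  by_cases h0 : ∀ i, hDeg E i = 0
  · exact ⟨0, h0⟩
  obtain ⟨i₀, hi₀⟩ := not_forall.mp h0
  set d : V → ℝ := fun i => hDeg E i
  have hd : ∀ i, 0 ≤ d i := fun i => Nat.cast_nonneg _
  have hS : 0 < ∑ i, d i ^ ((r : ℝ) / ((r : ℝ) - 1)) :=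
    sum_pos' (fun i _ => Real.rpow_nonneg (hd i) _)
      ⟨i₀, mem_univ _, Real.rpow_pos_of_pos (by simp [d, Nat.pos_of_ne_zero hi₀]) _⟩
  have hcn := sum_dualWeights_pow (r := r) (by omega) hd hS
  have hE1 : ∀ e ∈ E, ∀ v ∈ e, dualWeights r d v = 1 := by
    by_contra! hne
    have := sum_hDeg_mul_div_lt_specRad hr hE (dualWeights_nonneg hd) hcn hne
    rw [sum_mul_dualWeights_div (by omega) hd hS, ← h] at this
    exact lt_irrefl _ this
  have hc1 := eq_one_of_forall_mem_edge_eq_one (by omega)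
    (fun i hi => dualWeights_of_eq_zero (by omega) (by simp [d, hi])) hcn hE1
  exact ⟨hDeg E i₀, fun i => Nat.cast_injective
    (eq_of_dualWeights_eq (by omega) hd hS ((hc1 i).trans (hc1 i₀).symm))⟩

end Regularity

theorem stmt_16_general (n r : ℕ) (hn : 0 < n) (hr : 3 ≤ r)
    (E : Finset (Finset (Fin n))) (hE : ∀ e ∈ E, e.card = r) :
    specRad (adjT r E) =
        ((1 / (n : ℝ)) * ∑ i, (hDeg E i : ℝ) ^ ((r : ℝ) / ((r : ℝ) - 1)))
          ^ (((r : ℝ) - 1) / (r : ℝ)) ↔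
      ∃ d : ℕ, ∀ i, hDeg E i = d := by
  have : Nonempty (Fin n) := ⟨⟨0, hn⟩⟩
  refine ⟨fun h => exists_forall_hDeg_eq_of_specRad_eq hr hE (by rwa [Fintype.card_fin]), ?_⟩
  rintro ⟨d, hd⟩
  have hn' : (n : ℝ) ≠ 0 := by positivity
  rw [specRad_adjT_of_forall_hDeg_eq (by omega) hE hd]
  simp only [hd, sum_const, card_univ, Fintype.card_fin, nsmul_eq_mul]
  rw [← mul_assoc, one_div_mul_cancel hn', one_mul, ← inv_div,
    Real.rpow_inv_rpow d.cast_nonneg (div_pos (cast_sub_one_pos (by omega)) (by positivity)).ne']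

theorem stmt_16 (n r : ℕ) (hn : 0 < n) (hr : 3 ≤ r)
    (E : Finset (Finset (Fin n))) (hE : ∀ e ∈ E, e.card = r) (hc : hConn E) :
    specRad (adjT r E) =
        ((1 / (n : ℝ)) * ∑ i, (hDeg E i : ℝ) ^ ((r : ℝ) / ((r : ℝ) - 1)))
          ^ (((r : ℝ) - 1) / (r : ℝ)) ↔
      ∃ d : ℕ, ∀ i, hDeg E i = d :=
  stmt_16_general n r hn hr E hE
end

section
/- Let H be a connected r-uniform hypergraph and H̃ the product hypergraph on V(H)×[r] (edges obtained from edges of H paired with pairwise-distinct second coordinates). Then Q(H̃) = (r-1)!·(D(H) ⊗ I_r) + A(H) ⊗ B, where I_r is the order-r dimension-r unit tensor and B is the tensor with entries 1 exactly on tuples of pairwise distinct indices; and ρ(Q(H̃)) = (r-1)!·ρ(Q(H)). -/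
/-- The order-`r` diagonal tensor with diagonal entries `d i`. -/
def diagT {V : Type*} [Fintype V] [DecidableEq V] {r : ℕ} (d : V → ℝ) :
    (Fin r → V) → ℝ :=
  fun t => ∑ i, if ∀ k, t k = i then d i else 0

/-- Edge set of the product hypergraph H̃ on `V × Fin r`: a set of `r` pairs whose
first coordinates form an edge of `H` and whose second coordinates are pairwise
distinct. -/
def tildeE {n : ℕ} (r : ℕ) (E : Finset (Finset (Fin n))) :
    Finset (Finset (Fin n × Fin r)) :=
  Finset.univ.filter
    (fun S => S.card = r ∧ S.image Prod.fst ∈ E ∧ (S.image Prod.snd).card = r)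

/-- Direct (Kronecker) product of two order-`r` real tensors. -/
def kronR {α β : Type*} {r : ℕ} (A : (Fin r → α) → ℝ) (B : (Fin r → β) → ℝ) :
    (Fin r → α × β) → ℝ :=
  fun t => A (fun k => (t k).1) * B (fun k => (t k).2)

/-- The order-`r`, dimension-`r` unit tensor: entry `1` iff all indices are equal. -/
def idT (r : ℕ) : (Fin r → Fin r) → ℝ :=
  fun t => if ∃ j, ∀ k, t k = j then (1 : ℝ) else 0

open Finset
open scoped Nat

theorem card_image_univ_eq_iff_injective {β : Type*} [DecidableEq β] {r : ℕ} (t : Fin r → β) :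
    #(univ.image t) = r ↔ Function.Injective t := by
  rw [← Set.injOn_univ, ← coe_univ, ← card_image_iff, card_univ, Fintype.card_fin]

theorem image_swap_of_mem {α : Type*} [DecidableEq α] {S : Finset α} {p q : α} (hp : p ∈ S)
    (hq : q ∈ S) : S.image (Equiv.swap p q) = S := by
  refine eq_of_subset_of_card_le (fun a ha => ?_) (card_image_of_injective _ (Equiv.injective _)).ge
  obtain ⟨b, hb, rfl⟩ := mem_image.1 ha
  rcases eq_or_ne b p with rfl | hbp
  · simpa using hq
  rcases eq_or_ne b q with rfl | hbq
  · simpa using hp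
  rwa [Equiv.swap_apply_of_ne_of_ne hbp hbq]

section Counting

variable {α : Type*} [Fintype α] [DecidableEq α] {r : ℕ}

theorem card_tuples_image_eq {S : Finset α} (hS : #S = r) :
    #{t : Fin r → α | univ.image t = S} = r ! := by
  let e : Fin r ≃ S := (finCongr hS.symm).trans S.equivFin.symm
  have hcard : Fintype.card (Fin r ≃ S) = r ! := by rw [Fintype.card_equiv e, Fintype.card_fin]
  rw [← hcard, ← card_univ]
  symm
  refine card_bij (fun (f : Fin r ≃ S) _ k => (f k : α)) ?_ ?_ ?_
  · intro f _
    rw [mem_filter]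
    refine ⟨mem_univ _, ?_⟩
    ext a
    simpa using ⟨fun ⟨k, hk⟩ => hk ▸ (f k).2, fun ha => ⟨f.symm ⟨a, ha⟩, by simp⟩⟩
  · intro f _ g _ hfg
    exact Equiv.ext fun k => Subtype.ext (congrFun hfg k)
  · intro t ht
    rw [mem_filter] at ht
    have hinj : Function.Injective t := by
      rw [← card_image_univ_eq_iff_injective, ht.2, hS]
    have hmem (k : Fin r) : t k ∈ S := ht.2 ▸ mem_image_of_mem t (mem_univ k)
    have hbij : Function.Bijective fun k => (⟨t k, hmem k⟩ : S) := by
      rw [Fintype.bijective_iff_injective_and_card]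
      exact ⟨fun a b hab => hinj (congrArg Subtype.val hab), by simp [hS]⟩
    exact ⟨Equiv.ofBijective _ hbij, mem_univ _, rfl⟩

theorem card_tuples_image_eq_apply_eq {S : Finset α} (hS : #S = r) (k : Fin r) {p : α}
    (hp : p ∈ S) : #{t : Fin r → α | univ.image t = S ∧ t k = p} = (r - 1)! := by
  have hfiber (q : α) (hq : q ∈ S) : #{t : Fin r → α | univ.image t = S ∧ t k = q} =
      #{t : Fin r → α | univ.image t = S ∧ t k = p} := by
    have hswap (t : Fin r → α) (ht : univ.image t = S) : univ.image (Equiv.swap p q ∘ t) = S := by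
      rw [← image_image, ht, image_swap_of_mem hp hq]
    refine card_nbij' (Equiv.swap p q ∘ ·) (Equiv.swap p q ∘ ·) ?_ ?_ ?_ ?_
    · intro t ht
      simp only [coe_filter, Set.mem_ofPred_eq, mem_univ, true_and] at ht ⊢
      exact ⟨hswap t ht.1, by simp [ht.2]⟩
    · intro t ht
      simp only [coe_filter, Set.mem_ofPred_eq, mem_univ, true_and] at ht ⊢
      exact ⟨hswap t ht.1, by simp [ht.2]⟩
    · intro t _
      simp [Function.comp_def]
    · intro t _
      simp [Function.comp_def]
  have htotal : #{t : Fin r → α | univ.image t = S} =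
      ∑ q ∈ S, #{t : Fin r → α | univ.image t = S ∧ t k = q} := by
    rw [card_eq_sum_card_fiberwise (f := fun t => t k) (t := S)]
    · simp only [filter_filter]
    · intro t ht
      rw [coe_filter, Set.mem_ofPred_eq] at ht
      exact ht.2 ▸ mem_image_of_mem t (mem_univ k)
  rw [sum_congr rfl hfiber, sum_const, hS, smul_eq_mul, card_tuples_image_eq hS] at htotal
  obtain ⟨m, rfl⟩ : ∃ m, r = m + 1 := Nat.exists_eq_succ_of_ne_zero (hS ▸ card_ne_zero_of_mem hp)
  rw [Nat.factorial_succ] at htotal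
  exact (Nat.eq_of_mul_eq_mul_left m.succ_pos htotal).symm

theorem card_tuples_image_mem_apply_eq {F : Finset (Finset α)} (hF : ∀ S ∈ F, #S = r)
    (k : Fin r) (p : α) :
    #{t : Fin r → α | univ.image t ∈ F ∧ t k = p} = (r - 1)! * hDeg F p := by
  rw [hDeg, card_eq_sum_card_fiberwise (f := fun t => univ.image t) (t := F.filter (p ∈ ·)),
    mul_comm, ← smul_eq_mul, ← sum_const]
  · refine sum_congr rfl fun S hS => ?_
    rw [mem_filter] at hS
    rw [filter_filter, ← card_tuples_image_eq_apply_eq (hF S hS.1) k hS.2]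
    congr 1
    ext t
    simp only [mem_filter, mem_univ, true_and]
    exact ⟨fun h => ⟨h.2, h.1.2⟩, fun h => ⟨⟨h.1 ▸ hS.1, h.2⟩, h.1⟩⟩
  · intro t ht
    simp only [mem_coe, mem_filter, mem_univ, true_and] at ht ⊢
    exact ⟨ht.1, ht.2 ▸ mem_image_of_mem t (mem_univ k)⟩

end Counting

def injT (r : ℕ) : (Fin r → Fin r) → ℝ :=
  fun s => if Function.Injective s then 1 else 0

section Injective
variable {r : ℕ}

theorem injective_iff_image_univ_eq_univ (σ : Fin r → Fin r) :
    Function.Injective σ ↔ univ.image σ = univ := by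
  rw [← card_image_univ_eq_iff_injective, ← card_eq_iff_eq_univ, Fintype.card_fin]

theorem card_injective : #{σ : Fin r → Fin r | Function.Injective σ} = r ! := by
  simp_rw [injective_iff_image_univ_eq_univ]
  exact card_tuples_image_eq (by simp)

theorem card_injective_apply_eq (k j : Fin r) :
    #{σ : Fin r → Fin r | Function.Injective σ ∧ σ k = j} = (r - 1)! := by
  simp_rw [injective_iff_image_univ_eq_univ]
  exact card_tuples_image_eq_apply_eq (by simp) k (mem_univ j)

theorem sum_injT_mul_apply (k : Fin r) (f : Fin r → ℝ) :
    ∑ σ, injT r σ * f (σ k) = (r - 1)! * ∑ j, f j := by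
  simp only [injT, ite_mul, one_mul, zero_mul]
  rw [← sum_filter, ← sum_fiberwise _ (fun σ => σ k), mul_sum]
  refine sum_congr rfl fun j _ => ?_
  rw [sum_congr rfl fun σ hσ => by rw [(mem_filter.1 hσ).2], sum_const, nsmul_eq_mul,
    filter_filter, card_injective_apply_eq]

theorem form_injT_const (c : ℝ) : form (injT r) (fun _ => c) = r ! * c ^ r := by
  simp only [form, injT, prod_const, card_univ, Fintype.card_fin, ite_mul, one_mul, zero_mul]
  rw [← sum_filter, sum_const, nsmul_eq_mul, card_injective]

end Injective

theorem prod_le_inv_mul_sum_pow_s19 {ι : Type*} [Fintype ι] [Nonempty ι] {z : ι → ℝ}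
    (hz : ∀ i, 0 ≤ z i) : ∏ i, z i ≤ (Fintype.card ι : ℝ)⁻¹ * ∑ i, z i ^ Fintype.card ι := by
  have hn : Fintype.card ι ≠ 0 := Fintype.card_ne_zero
  have hamgm := Real.geom_mean_le_arith_mean_weighted univ (fun _ => (Fintype.card ι : ℝ)⁻¹)
    (fun i => z i ^ Fintype.card ι) (fun _ _ => by positivity)
    (by simp [hn]) (fun i _ => pow_nonneg (hz i) _)
  simp only [Real.pow_rpow_inv_natCast (hz _) hn, ← mul_sum] at hamgm
  exact hamgm

theorem sum_injT_mul_prod_le {r : ℕ} (hr : 0 < r) {Y : Fin r → Fin r → ℝ} {x : Fin r → ℝ}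
    (hY : ∀ k j, 0 ≤ Y k j) (hx : ∀ k, 0 ≤ x k) (hxY : ∀ k, x k ^ r = ∑ j, Y k j ^ r) :
    ∑ σ, injT r σ * ∏ k, Y k (σ k) ≤ (r - 1)! * ∏ k, x k := by
  have hinjT (σ) : 0 ≤ injT r σ := by unfold injT; positivity
  by_cases hzero : ∃ k, x k = 0
  · obtain ⟨k, hk⟩ := hzero
    have hrow (j : Fin r) : Y k j = 0 := by
      have hsum : ∑ j, Y k j ^ r = 0 := by rw [← hxY k, hk, zero_pow hr.ne']
      exact pow_eq_zero_iff hr.ne' |>.1 <|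
        (sum_eq_zero_iff_of_nonneg fun j _ => pow_nonneg (hY k j) r).1 hsum j (mem_univ j)
    rw [prod_eq_zero (mem_univ k) hk, mul_zero]
    exact (sum_eq_zero fun σ _ => by rw [prod_eq_zero (mem_univ k) (hrow (σ k)), mul_zero]).le
  push Not at hzero
  have : Nonempty (Fin r) := ⟨⟨0, hr⟩⟩
  -- AM-GM for the rows of `Y` normalised to unit `ℓ^r`-norm
  set z : Fin r → Fin r → ℝ := fun k j => Y k j / x k
  have hz (k j) : 0 ≤ z k j := div_nonneg (hY k j) (hx k)
  have hzrow (k) : ∑ j, z k j ^ r = 1 := by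
    simp only [z, div_pow, ← sum_div, ← hxY k, div_self (pow_ne_zero r (hzero k))]
  have hYz (k j) : Y k j = x k * z k j := by simp only [z, mul_div_cancel₀ _ (hzero k)]
  calc ∑ σ, injT r σ * ∏ k, Y k (σ k)
      = (∏ k, x k) * ∑ σ, injT r σ * ∏ k, z k (σ k) := by
        simp only [hYz, prod_mul_distrib, mul_sum]
        exact sum_congr rfl fun σ _ => by ring
    _ ≤ (∏ k, x k) * ∑ σ, injT r σ * ((r : ℝ)⁻¹ * ∑ k, z k (σ k) ^ r) := by
        gcongr with σ
        · exact prod_nonneg fun k _ => hx k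
        · exact hinjT σ
        · simpa using prod_le_inv_mul_sum_pow_s19 (z := fun k => z k (σ k)) fun k => hz k (σ k)
    _ = (∏ k, x k) * ((r : ℝ)⁻¹ * ∑ k, ∑ σ, injT r σ * z k (σ k) ^ r) := by
        simp only [mul_sum]
        rw [sum_comm]
        exact sum_congr rfl fun _ _ => sum_congr rfl fun _ _ => by ring
    _ = (r - 1)! * ∏ k, x k := by
        rw [sum_congr rfl fun k _ => sum_injT_mul_apply k fun j => z k j ^ r]
        simp only [hzrow, mul_one, sum_const, card_univ, Fintype.card_fin, nsmul_eq_mul]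
        field_simp

section Form
variable {V W : Type*} [Fintype V] [Fintype W] {r : ℕ}

theorem form_add (T₁ T₂ : (Fin r → V) → ℝ) (x : V → ℝ) :
    form (fun t => T₁ t + T₂ t) x = form T₁ x + form T₂ x := by
  simp only [form, add_mul, sum_add_distrib]

theorem form_diagT [DecidableEq V] (d x : V → ℝ) :
    form (diagT (r := r) d) x = ∑ i, d i * x i ^ r := by
  simp only [form, diagT, sum_mul, ite_mul, zero_mul]
  rw [sum_comm]
  refine sum_congr rfl fun i _ => ?_
  simp only [← funext_iff, sum_ite_eq', mem_univ, if_true, prod_const, card_univ,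
    Fintype.card_fin]

theorem form_kronR (A : (Fin r → V) → ℝ) (B : (Fin r → W) → ℝ) (y : V × W → ℝ) :
    form (kronR A B) y = ∑ a, ∑ b, A a * B b * ∏ k, y (a k, b k) := by
  rw [form, ← Fintype.sum_prod_type',
    ← (Equiv.arrowProdEquivProdArrow (Fin r) (fun _ => V) (fun _ => W)).sum_comp]
  rfl

theorem form_kronR_mul (A : (Fin r → V) → ℝ) (B : (Fin r → W) → ℝ) (x : V → ℝ) (z : W → ℝ) :
    form (kronR A B) (fun p => x p.1 * z p.2) = form A x * form B z := by
  rw [form_kronR, form, form, sum_mul_sum]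
  simp only [prod_mul_distrib]
  exact sum_congr rfl fun _ _ => sum_congr rfl fun _ _ => by ring

end Form

section Diagonal
variable {V : Type*} [Fintype V] [DecidableEq V] {r : ℕ}

theorem diagT_apply (k₀ : Fin r) (d : V → ℝ) (t : Fin r → V) :
    diagT d t = if ∀ k, t k = t k₀ then d (t k₀) else 0 := by
  unfold diagT
  split_ifs with h
  · rw [sum_eq_single (t k₀) (fun i _ hi => if_neg fun h' => hi (h' k₀).symm) (by simp),
      if_pos h]
  · exact sum_eq_zero fun i _ => if_neg fun h' => h fun k => (h' k).trans (h' k₀).symm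

theorem idT_apply (k₀ : Fin r) (t : Fin r → Fin r) :
    idT r t = if ∀ k, t k = t k₀ then 1 else 0 := by
  unfold idT
  congr 1
  exact propext ⟨fun ⟨j, hj⟩ k => (hj k).trans (hj k₀).symm, fun h => ⟨t k₀, h⟩⟩

theorem diagT_mul_left (c : ℝ) (d : V → ℝ) (t : Fin r → V) :
    diagT (fun i => c * d i) t = c * diagT d t := by
  simp only [diagT, mul_sum, mul_ite, mul_zero]

theorem diagT_comp_fst (hr : 0 < r) (d : V → ℝ) (t : Fin r → V × Fin r) :
    diagT (fun p => d p.1) t = kronR (diagT d) (idT r) t := by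
  simp only [kronR, diagT_apply ⟨0, hr⟩, idT_apply ⟨0, hr⟩, Prod.ext_iff, forall_and]
  split_ifs <;> simp_all

end Diagonal

noncomputable def signlessLapT {V : Type*} [Fintype V] [DecidableEq V] (r : ℕ)
    (E : Finset (Finset V)) : (Fin r → V) → ℝ :=
  fun t => diagT (fun i => (hDeg E i : ℝ)) t + adjT r E t

theorem adjT_nonneg {V : Type*} [DecidableEq V] {r : ℕ} (E : Finset (Finset V)) (t : Fin r → V) :
    0 ≤ adjT r E t := by
  unfold adjT
  positivity

section ProductHypergraph

variable {n r : ℕ} {E : Finset (Finset (Fin n))}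

theorem image_mem_tildeE_iff (t : Fin r → Fin n × Fin r) :
    univ.image t ∈ tildeE r E ↔
      univ.image (fun k => (t k).1) ∈ E ∧ Function.Injective (fun k => (t k).2) := by
  simp only [tildeE, mem_filter, mem_univ, true_and, image_image]
  rw [← card_image_univ_eq_iff_injective (fun k => (t k).2)]
  refine ⟨fun h => h.2, fun h => ⟨?_, h⟩⟩
  rw [card_image_univ_eq_iff_injective]
  exact fun a b hab => (card_image_univ_eq_iff_injective _).1 h.2 (congrArg Prod.snd hab)

theorem adjT_tildeE : adjT r (tildeE r E) = kronR (adjT r E) (injT r) := by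
  funext t
  simp only [adjT, kronR, injT, image_mem_tildeE_iff]
  split_ifs <;> simp_all

theorem hDeg_tildeE (hr : 0 < r) (hE : ∀ e ∈ E, #e = r) (i : Fin n) (j : Fin r) :
    hDeg (tildeE r E) (i, j) = (r - 1)! * hDeg E i := by
  let k : Fin r := ⟨0, hr⟩
  -- a tuple through `(i, j)` is a tuple through `i` paired with a permutation sending `k` to `j`
  have hcount : #{t : Fin r → Fin n × Fin r | univ.image t ∈ tildeE r E ∧ t k = (i, j)} =
      #{a : Fin r → Fin n | univ.image a ∈ E ∧ a k = i} *
        #{σ : Fin r → Fin r | Function.Injective σ ∧ σ k = j} := by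
    rw [← card_product]
    refine card_equiv (Equiv.arrowProdEquivProdArrow (Fin r) (fun _ => Fin n) (fun _ => Fin r))
      fun t => ?_
    simp only [mem_filter, mem_univ, true_and, mem_product, image_mem_tildeE_iff, Prod.ext_iff]
    tauto
  rw [card_tuples_image_mem_apply_eq (fun S hS => (mem_filter.1 hS).2.1),
    card_tuples_image_mem_apply_eq hE, card_injective_apply_eq, mul_right_comm, mul_assoc] at hcount
  exact Nat.eq_of_mul_eq_mul_left (Nat.factorial_pos _) hcount

theorem signlessLapT_tildeE_apply (hr : 0 < r) (hE : ∀ e ∈ E, #e = r)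
    (t : Fin r → Fin n × Fin r) :
    signlessLapT r (tildeE r E) t =
      (r - 1)! * kronR (diagT fun i => (hDeg E i : ℝ)) (idT r) t + kronR (adjT r E) (injT r) t := by
  have hdeg : (fun p => (hDeg (tildeE r E) p : ℝ)) = fun p => (r - 1)! * (hDeg E p.1 : ℝ) := by
    funext ⟨i, j⟩
    rw [hDeg_tildeE hr hE]
    push_cast
    rfl
  rw [signlessLapT, hdeg, diagT_mul_left, diagT_comp_fst hr (fun i => (hDeg E i : ℝ)), adjT_tildeE]

theorem form_diagT_hDeg_tildeE (hr : 0 < r) (hE : ∀ e ∈ E, #e = r) {x : Fin n → ℝ}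
    {y : Fin n × Fin r → ℝ} (hxy : ∀ i, x i ^ r = ∑ j, y (i, j) ^ r) :
    form (diagT (r := r) fun p => (hDeg (tildeE r E) p : ℝ)) y =
      (r - 1)! * form (diagT (r := r) fun i => (hDeg E i : ℝ)) x := by
  simp only [form_diagT, hDeg_tildeE hr hE, Fintype.sum_prod_type, hxy, mul_sum]
  push_cast
  exact sum_congr rfl fun _ _ => sum_congr rfl fun _ _ => by ring

theorem form_adjT_tildeE_le (hr : 0 < r) {x : Fin n → ℝ} {y : Fin n × Fin r → ℝ}
    (hx : ∀ i, 0 ≤ x i) (hy : ∀ p, 0 ≤ y p) (hxy : ∀ i, x i ^ r = ∑ j, y (i, j) ^ r) :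
    form (adjT r (tildeE r E)) y ≤ (r - 1)! * form (adjT r E) x := by
  rw [adjT_tildeE, form_kronR, form, mul_sum]
  refine sum_le_sum fun a _ => ?_
  simp only [mul_assoc, ← mul_sum]
  rw [mul_left_comm]
  exact mul_le_mul_of_nonneg_left
    (sum_injT_mul_prod_le hr (fun _ _ => hy _) (fun _ => hx _) fun k => hxy (a k)) (adjT_nonneg E a)

theorem form_signlessLapT_tildeE_le (hr : 0 < r) (hE : ∀ e ∈ E, #e = r) {x : Fin n → ℝ}
    {y : Fin n × Fin r → ℝ} (hx : ∀ i, 0 ≤ x i) (hy : ∀ p, 0 ≤ y p)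
    (hxy : ∀ i, x i ^ r = ∑ j, y (i, j) ^ r) :
    form (signlessLapT r (tildeE r E)) y ≤ (r - 1)! * form (signlessLapT r E) x := by
  unfold signlessLapT
  simp only [form_add, mul_add, form_diagT_hDeg_tildeE hr hE hxy]
  exact add_le_add_right (form_adjT_tildeE_le hr hx hy hxy) _

theorem form_signlessLapT_tildeE_fst_mul (hr : 0 < r) (hE : ∀ e ∈ E, #e = r) (x : Fin n → ℝ)
    {c : ℝ} (hc : c ^ r = (r : ℝ)⁻¹) :
    form (signlessLapT r (tildeE r E)) (fun p => x p.1 * c) =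
      (r - 1)! * form (signlessLapT r E) x := by
  have hxy (i : Fin n) : x i ^ r = ∑ j : Fin r, (x i * c) ^ r := by
    rw [sum_const, card_univ, Fintype.card_fin, nsmul_eq_mul, mul_pow, hc]
    field_simp
  have hfact : (r ! : ℝ) * (r : ℝ)⁻¹ = (r - 1)! := by
    rw [← Nat.mul_factorial_pred hr.ne']
    push_cast
    field_simp
  unfold signlessLapT
  simp only [form_add, mul_add,
    form_diagT_hDeg_tildeE hr hE (y := fun p => x p.1 * c) hxy]
  rw [adjT_tildeE, form_kronR_mul (z := fun _ => c), form_injT_const, hc, hfact,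
    mul_comm (form _ x)]

end ProductHypergraph

theorem specRad_eq_mul_of_forall_exists {V W : Type*} [Fintype V] [Fintype W] {r : ℕ}
    {T₁ : (Fin r → V) → ℝ} {T₂ : (Fin r → W) → ℝ} {c : ℝ} (hc : 0 ≤ c)
    (hle : ∀ y : W → ℝ, (∀ i, 0 ≤ y i) → ∑ i, y i ^ r = 1 →
      ∃ x : V → ℝ, (∀ i, 0 ≤ x i) ∧ ∑ i, x i ^ r = 1 ∧ form T₂ y ≤ c * form T₁ x)
    (hge : ∀ x : V → ℝ, (∀ i, 0 ≤ x i) → ∑ i, x i ^ r = 1 →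
      ∃ y : W → ℝ, (∀ i, 0 ≤ y i) ∧ ∑ i, y i ^ r = 1 ∧ c * form T₁ x ≤ form T₂ y) :
    specRad T₂ = c * specRad T₁ := by
  rw [specRad, specRad, ← smul_eq_mul, ← Real.sSup_smul_of_nonneg hc]
  apply csSup_eq_csSup_of_forall_exists_le
  · rintro _ ⟨y, hy, hy1, rfl⟩
    obtain ⟨x, hx, hx1, hyx⟩ := hle y hy hy1
    exact ⟨c * form T₁ x, Set.smul_mem_smul_set ⟨x, hx, hx1, rfl⟩, hyx⟩
  · rintro _ ⟨_, ⟨x, hx, hx1, rfl⟩, rfl⟩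
    obtain ⟨y, hy, hy1, hxy⟩ := hge x hx hx1
    exact ⟨form T₂ y, ⟨y, hy, hy1, rfl⟩, hxy⟩

theorem specRad_signlessLapT_tildeE {n r : ℕ} (hr : 0 < r) {E : Finset (Finset (Fin n))}
    (hE : ∀ e ∈ E, #e = r) :
    specRad (signlessLapT r (tildeE r E)) = (r - 1)! * specRad (signlessLapT r E) := by
  refine specRad_eq_mul_of_forall_exists (by positivity) (fun y hy hy1 => ?_) (fun x hx hx1 => ?_)
  · have hrow (i : Fin n) : 0 ≤ ∑ j, y (i, j) ^ r := sum_nonneg fun j _ => pow_nonneg (hy _) r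
    let x : Fin n → ℝ := fun i => (∑ j, y (i, j) ^ r) ^ (r⁻¹ : ℝ)
    have hxy (i : Fin n) : x i ^ r = ∑ j, y (i, j) ^ r := Real.rpow_inv_natCast_pow (hrow i) hr.ne'
    have hx (i : Fin n) : 0 ≤ x i := Real.rpow_nonneg (hrow i) _
    refine ⟨x, hx, ?_, form_signlessLapT_tildeE_le hr hE hx hy hxy⟩
    rw [← hy1, Fintype.sum_prod_type]
    exact sum_congr rfl fun i _ => hxy i
  · let c : ℝ := (r⁻¹ : ℝ) ^ (r⁻¹ : ℝ)
    have hc : c ^ r = (r : ℝ)⁻¹ := Real.rpow_inv_natCast_pow (by positivity) hr.ne'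
    refine ⟨fun p => x p.1 * c, fun p => mul_nonneg (hx _) (by positivity), ?_,
      (form_signlessLapT_tildeE_fst_mul hr hE x hc).ge⟩
    simp only [← hx1, Fintype.sum_prod_type, mul_pow, hc, sum_const, card_univ, Fintype.card_fin,
      nsmul_eq_mul]
    exact sum_congr rfl fun i _ => by field_simp

theorem stmt_19_general (n r : ℕ) (hr : 3 ≤ r) (E : Finset (Finset (Fin n)))
    (hE : ∀ e ∈ E, e.card = r) :
    (∀ t : Fin r → Fin n × Fin r,
        diagT (fun p => (hDeg (tildeE r E) p : ℝ)) t + adjT r (tildeE r E) t =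
          ((r - 1).factorial : ℝ) *
              kronR (diagT (fun i => (hDeg E i : ℝ))) (idT r) t +
            kronR (adjT r E)
              (fun s : Fin r → Fin r => if Function.Injective s then (1 : ℝ) else 0) t) ∧
      specRad (fun t : Fin r → Fin n × Fin r =>
          diagT (fun p => (hDeg (tildeE r E) p : ℝ)) t + adjT r (tildeE r E) t) =
        ((r - 1).factorial : ℝ) *
          specRad (fun t : Fin r → Fin n =>
            diagT (fun i => (hDeg E i : ℝ)) t + adjT r E t) := by
  exact ⟨signlessLapT_tildeE_apply (by omega) hE, specRad_signlessLapT_tildeE (by omega) hE⟩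

theorem stmt_19 (n r : ℕ) (hr : 3 ≤ r) (E : Finset (Finset (Fin n)))
    (hE : ∀ e ∈ E, e.card = r) (hc : hConn E) :
    (∀ t : Fin r → Fin n × Fin r,
        diagT (fun p => (hDeg (tildeE r E) p : ℝ)) t + adjT r (tildeE r E) t =
          ((r - 1).factorial : ℝ) *
              kronR (diagT (fun i => (hDeg E i : ℝ))) (idT r) t +
            kronR (adjT r E)
              (fun s : Fin r → Fin r => if Function.Injective s then (1 : ℝ) else 0) t) ∧
      specRad (fun t : Fin r → Fin n × Fin r =>
          diagT (fun p => (hDeg (tildeE r E) p : ℝ)) t + adjT r (tildeE r E) t) =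
        ((r - 1).factorial : ℝ) *
          specRad (fun t : Fin r → Fin n =>
            diagT (fun i => (hDeg E i : ℝ)) t + adjT r E t) :=
  stmt_19_general n r hr E hE
end
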